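/- (Theorem 2.2, uniqueness of the optimal parameters) Fix real numbers a11, a12, a21, a22, σx, σy, R with a22 ≠ 0, R > 0, ã < 0. Let ε₀ > 0 and let a, σX², s̃ : (0, ε₀) → ℝ be bounded functions with s̃(ε) ≥ s₀ for some constant s₀ > 0, such that for each ε: (i) −s̃(ε)²/R + 2*a(ε)*s̃(ε) + σX²(ε) = 0 exactly; (ii) σX²(ε) = −2*(a(ε) − ã*(1 − ε*â))*s̃(ε) + σs(ε)² + O(ε²) as ε → 0⁺ (the manifold of Theorem 2.1); and (iii) σX²(ε) = (ã*(1 − ε*â) − a(ε))*s̃(ε) + (a(ε)/(ã*(1 − ε*â)))*σs(ε)² + O(ε²) as ε → 0⁺ (the optimality manifold). Then a(ε) = ã*(1 − ε*â) + O(ε²) and σX²(ε) = σs(ε)² + O(ε²) as ε → 0⁺. -/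

import Mathlib

/-!
Write `A = ã(1 − εâ)`, `S = σs²`. Subtracting the optimality relation from the manifold
relation gives `(a − A)(s̃ A + S) = O(ε²) · A`. By the Riccati equation
`s̃ A + S = s̃²/R − A s̃ + O(ε²)`, which is at least `s₀ |ã| / 4` for small `ε` since `A → ã < 0`;
hence `a − A = O(ε²)`. The manifold relation with `s̃` bounded then gives `σX² − S = O(ε²)`.
-/

/-- `f = O(ε²)` as `ε → 0⁺`, with the bound holding inside `(0, ε₀)`. -/
def IsO2 (ε₀ : ℝ) (f : ℝ → ℝ) : Prop :=
  ∃ C ε₁ : ℝ, 0 < C ∧ 0 < ε₁ ∧ ε₁ ≤ ε₀ ∧ ∀ ε, 0 < ε → ε < ε₁ → |f ε| ≤ C * ε ^ 2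

/-- `σs(ε)² := σx²(1 − 2εâ) + ε σy² a12²/a22²`. -/
noncomputable def sigs (a12 a21 a22 σx σy ε : ℝ) : ℝ :=
  σx ^ 2 * (1 - 2 * ε * (a12 * a21 / a22 ^ 2)) + ε * σy ^ 2 * a12 ^ 2 / a22 ^ 2

open Filter Topology Asymptotics Set

theorem isO2_iff_isBigO {ε₀ : ℝ} {f : ℝ → ℝ} :
    IsO2 ε₀ f ↔ 0 < ε₀ ∧ f =O[𝓝[>] 0] fun ε => ε ^ 2 := by
  constructor
  · rintro ⟨C, ε₁, -, hε₁, hε₁₀, hf⟩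
    refine ⟨hε₁.trans_le hε₁₀, .of_bound C ?_⟩
    filter_upwards [Ioo_mem_nhdsGT hε₁] with ε ⟨hε, hεε₁⟩
    simpa using hf ε hε hεε₁
  · rintro ⟨hε₀, hf⟩
    obtain ⟨C, hC, hCf⟩ := hf.exists_pos
    obtain ⟨ε₁, hε₁, hsub⟩ := mem_nhdsGT_iff_exists_Ioo_subset.mp hCf.bound
    refine ⟨C, min ε₁ ε₀, hC, lt_min hε₁ hε₀, min_le_right _ _, fun ε hε hεlt => ?_⟩
    simpa using hsub ⟨hε, hεlt.trans_le (min_le_left _ _)⟩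

theorem Asymptotics.IsBigO.of_mul_of_eventually_ge {α : Type*} {l : Filter α}
    {u D g : α → ℝ} {c : ℝ} (hc : 0 < c) (hD : ∀ᶠ x in l, c ≤ D x)
    (h : (fun x => u x * D x) =O[l] g) : u =O[l] g := by
  refine (IsBigO.of_bound c⁻¹ ?_).trans h
  filter_upwards [hD] with x hx
  rw [norm_mul, Real.norm_of_nonneg (hc.le.trans hx), le_inv_mul_iff₀ hc, mul_comm]
  exact mul_le_mul_of_nonneg_left hx (norm_nonneg _)

section Manifolds

variable {α : Type*} {l : Filter α} {a σ s A S g : α → ℝ}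

theorem drift_mul_eq_residual_sub_mul {x : α} (hA : A x ≠ 0) :
    (a x - A x) * (s x * A x + S x) =
      ((σ x - (-2 * (a x - A x) * s x + S x)) - (σ x - ((A x - a x) * s x + a x / A x * S x)))
        * A x := by
  field_simp
  ring

theorem drift_isBigO {R α₀ s₀ : ℝ} (hR : 0 < R) (hα₀ : α₀ < 0) (hs₀ : 0 < s₀)
    (hA : Tendsto A l (𝓝 α₀)) (hs : ∀ᶠ x in l, s₀ ≤ s x)
    (hric : ∀ᶠ x in l, -(s x) ^ 2 / R + 2 * a x * s x + σ x = 0)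
    (hg : Tendsto g l (𝓝 0))
    (hman : (fun x => σ x - (-2 * (a x - A x) * s x + S x)) =O[l] g)
    (hopt : (fun x => σ x - ((A x - a x) * s x + a x / A x * S x)) =O[l] g) :
    (fun x => a x - A x) =O[l] g := by
  set F := fun x => σ x - (-2 * (a x - A x) * s x + S x)
  have hA_neg : ∀ᶠ x in l, A x < α₀ / 2 := hA.eventually (gt_mem_nhds (by linarith))
  have hF_small : ∀ᶠ x in l, F x < s₀ * -α₀ / 4 :=
    (hman.trans_tendsto hg).eventually (gt_mem_nhds (by nlinarith))
  have hD : ∀ᶠ x in l, s₀ * -α₀ / 4 ≤ s x * A x + S x := by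
    filter_upwards [hA_neg, hF_small, hs, hric] with x hAx hFx hsx hricx
    have hsq : 0 ≤ s x ^ 2 / R := by positivity
    have hσ : σ x = s x ^ 2 / R - 2 * a x * s x := by linear_combination hricx
    simp only [F, hσ] at hFx
    nlinarith
  refine IsBigO.of_mul_of_eventually_ge (by nlinarith) hD ?_
  have hFGA : (fun x => (F x - (σ x - ((A x - a x) * s x + a x / A x * S x))) * A x) =O[l] g := by
    simpa using (hman.sub hopt).mul (hA.isBigO_one ℝ)
  refine hFGA.congr' ?_ .rfl
  filter_upwards [hA_neg] with x hAx
  exact (drift_mul_eq_residual_sub_mul (by linarith)).symm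

theorem variance_isBigO (hs : s =O[l] fun _ => (1 : ℝ))
    (hman : (fun x => σ x - (-2 * (a x - A x) * s x + S x)) =O[l] g)
    (hdrift : (fun x => a x - A x) =O[l] g) :
    (fun x => σ x - S x) =O[l] g := by
  have hprod : (fun x => (a x - A x) * s x) =O[l] g := by simpa using hdrift.mul hs
  exact (hman.sub (hprod.const_mul_left 2)).congr_left fun x => by ring

end Manifolds

theorem stmt10_general (a11 a12 a21 a22 σx σy R : ℝ) (hR : 0 < R)
    (hat : a11 - a12 * a21 / a22 < 0)
    (ε₀ : ℝ) (a sigX2 stil : ℝ → ℝ)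
    (hbdd : ∃ M : ℝ, ∀ ε, 0 < ε → ε < ε₀ →
      |a ε| ≤ M ∧ |sigX2 ε| ≤ M ∧ |stil ε| ≤ M)
    (s₀ : ℝ) (hs₀ : 0 < s₀) (hstil : ∀ ε, 0 < ε → ε < ε₀ → s₀ ≤ stil ε)
    (hric : ∀ ε, 0 < ε → ε < ε₀ →
      -(stil ε) ^ 2 / R + 2 * a ε * stil ε + sigX2 ε = 0)
    (hman : IsO2 ε₀ (fun ε =>
      sigX2 ε -
        (-2 * (a ε - (a11 - a12 * a21 / a22) * (1 - ε * (a12 * a21 / a22 ^ 2))) * stil ε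
          + sigs a12 a21 a22 σx σy ε)))
    (hopt : IsO2 ε₀ (fun ε =>
      sigX2 ε -
        (((a11 - a12 * a21 / a22) * (1 - ε * (a12 * a21 / a22 ^ 2)) - a ε) * stil ε
          + (a ε / ((a11 - a12 * a21 / a22) * (1 - ε * (a12 * a21 / a22 ^ 2))))
              * sigs a12 a21 a22 σx σy ε))) :
    IsO2 ε₀ (fun ε =>
        a ε - (a11 - a12 * a21 / a22) * (1 - ε * (a12 * a21 / a22 ^ 2))) ∧
      IsO2 ε₀ (fun ε => sigX2 ε - sigs a12 a21 a22 σx σy ε) := by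
  simp only [isO2_iff_isBigO] at hman hopt ⊢
  obtain ⟨hε₀, hman⟩ := hman
  have hIoo : Ioo 0 ε₀ ∈ 𝓝[>] (0 : ℝ) := Ioo_mem_nhdsGT hε₀
  have hA : Tendsto (fun ε => (a11 - a12 * a21 / a22) * (1 - ε * (a12 * a21 / a22 ^ 2)))
      (𝓝[>] 0) (𝓝 (a11 - a12 * a21 / a22)) :=
    ((by fun_prop : Continuous _).tendsto' 0 _ (by simp)).mono_left nhdsWithin_le_nhds
  have hg : Tendsto (fun ε : ℝ => ε ^ 2) (𝓝[>] 0) (𝓝 0) :=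
    ((continuous_pow 2).tendsto' 0 _ (by simp)).mono_left nhdsWithin_le_nhds
  have hs : ∀ᶠ ε in 𝓝[>] 0, s₀ ≤ stil ε := by
    filter_upwards [hIoo] with ε ⟨hε, hεε₀⟩ using hstil ε hε hεε₀
  have hric' : ∀ᶠ ε in 𝓝[>] 0, -(stil ε) ^ 2 / R + 2 * a ε * stil ε + sigX2 ε = 0 := by
    filter_upwards [hIoo] with ε ⟨hε, hεε₀⟩ using hric ε hε hεε₀
  have hs_bdd : stil =O[𝓝[>] 0] fun _ => (1 : ℝ) := by
    obtain ⟨M, hM⟩ := hbdd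
    refine .of_bound M ?_
    filter_upwards [hIoo] with ε ⟨hε, hεε₀⟩
    simpa using (hM ε hε hεε₀).2.2
  have hdrift := drift_isBigO hR hat hs₀ hA hs hric' hg hman hopt.2
  exact ⟨⟨hε₀, hdrift⟩, hε₀, variance_isBigO hs_bdd hman hdrift⟩

/-- Theorem 2.2, uniqueness of the optimal parameters: the manifold of
Theorem 2.1 together with the optimality manifold force
`a(ε) = ã(1 − εâ) + O(ε²)` and `σX²(ε) = σs(ε)² + O(ε²)`. -/
theorem stmt10 (a11 a12 a21 a22 σx σy R : ℝ) (ha22 : a22 ≠ 0) (hR : 0 < R)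
    (hat : a11 - a12 * a21 / a22 < 0)
    (ε₀ : ℝ) (hε₀ : 0 < ε₀) (a sigX2 stil : ℝ → ℝ)
    (hbdd : ∃ M : ℝ, ∀ ε, 0 < ε → ε < ε₀ →
      |a ε| ≤ M ∧ |sigX2 ε| ≤ M ∧ |stil ε| ≤ M)
    (s₀ : ℝ) (hs₀ : 0 < s₀) (hstil : ∀ ε, 0 < ε → ε < ε₀ → s₀ ≤ stil ε)
    (hric : ∀ ε, 0 < ε → ε < ε₀ →
      -(stil ε) ^ 2 / R + 2 * a ε * stil ε + sigX2 ε = 0)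
    (hman : IsO2 ε₀ (fun ε =>
      sigX2 ε -
        (-2 * (a ε - (a11 - a12 * a21 / a22) * (1 - ε * (a12 * a21 / a22 ^ 2))) * stil ε
          + sigs a12 a21 a22 σx σy ε)))
    (hopt : IsO2 ε₀ (fun ε =>
      sigX2 ε -
        (((a11 - a12 * a21 / a22) * (1 - ε * (a12 * a21 / a22 ^ 2)) - a ε) * stil ε
          + (a ε / ((a11 - a12 * a21 / a22) * (1 - ε * (a12 * a21 / a22 ^ 2))))
              * sigs a12 a21 a22 σx σy ε))) :
    IsO2 ε₀ (fun ε =>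
        a ε - (a11 - a12 * a21 / a22) * (1 - ε * (a12 * a21 / a22 ^ 2))) ∧
      IsO2 ε₀ (fun ε => sigX2 ε - sigs a12 a21 a22 σx σy ε) :=
  stmt10_general a11 a12 a21 a22 σx σy R hR hat ε₀ a sigX2 stil hbdd s₀ hs₀ hstil hric hman hopt
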